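/- Let F : ℝ^n → ℝ be differentiable with F ∈ S_{μ, L_F} for some μ > 0, let N be a real n×n skew-symmetric matrix and B a real n×n matrix with N = B^sym − 2B where B^sym = B + Bᵀ and L_{B^sym} = ‖B^sym‖, and let x* satisfy ∇F(x*) + N x* = 0. Suppose 0 < α < 1/max{2L_{B^sym}, 2L_F} and the sequence (x_k) satisfies the gradient and skew-symmetric splitting (GSS) iteration (x_{k+1} − x_k)/α = −(∇F(x_k) + B^sym x_k − 2B x_{k+1}). Then E^{αBD}(x_{k+1}) ≤ (1 + αμ)^{−1} E^{αBD}(x_k) for every k, where E^{αBD}(x) := (1/2)‖x − x*‖²_{I − αB^sym} − α D_F(x*, x). Moreover, for α = min{1/(4L_{B^sym}), 1/(4L_F)}, one has ‖x_k − x*‖² ≤ (1 + 1/max{4L_{B^sym}/μ, 4L_F/μ})^{−k} · 6‖x_0 − x*‖² for all k. -/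

import Mathlib

open Matrix

/-- The spectral norm (ℓ²-operator norm) of a real square matrix. -/
noncomputable def specNorm {n : ℕ} (M : Matrix (Fin n) (Fin n) ℝ) : ℝ :=
  ‖Matrix.toEuclideanCLM (𝕜 := ℝ) M‖

/-- The continuous linear functional `v ↦ ⟨z, v⟩` on `ℝⁿ`. -/
noncomputable def dpCLM {m : ℕ} (z : Fin m → ℝ) : (Fin m → ℝ) →L[ℝ] ℝ :=
  LinearMap.toContinuousLinearMap
    { toFun := fun v => z ⬝ᵥ v
      map_add' := fun a b => by simp [dotProduct_add]
      map_smul' := fun c a => by simp [dotProduct_smul] }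

/-!
Subtracting the optimality condition `∇F(x*) + N x* = 0` from the GSS step and pairing with
`x_{k+1} - x*` kills the skew-symmetric part `N`, leaving
`⟨(I - αBˢʸᵐ)(x_{k+1} - x_k), x_{k+1} - x*⟩ = -α ⟨∇F(x_k) - ∇F(x*), x_{k+1} - x*⟩`.
Polarization on the left and the three-point identity for Bregman divergences on the right turn
this into
`E(x_{k+1}) - E(x_k) = -½‖x_{k+1} - x_k‖²_{I-αBˢʸᵐ} + α D_F(x_{k+1}, x_k)
  - α (D_F(x_{k+1}, x*) + D_F(x*, x_{k+1}))`.
For `α ‖Bˢʸᵐ‖, α L_F ≤ ½` the first two terms add up to a nonpositive number, and strong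
convexity bounds the last one by `-αμ‖x_{k+1} - x*‖²`, which dominates `-αμ E(x_{k+1})`.
For the tuned step size `E(x)` lies between `¼‖x - x*‖²` and `⅝‖x - x*‖²`, so the energy decay
transfers to the iterates with constant `4 · ⅝ ≤ 6`.
-/

section QuadraticForm

variable {ι R : Type*} [Fintype ι]

theorem dotProduct_mulVec_comm_of_transpose_eq [CommSemiring R] {M : Matrix ι ι R}
    (hM : Mᵀ = M) (a b : ι → R) : a ⬝ᵥ M *ᵥ b = b ⬝ᵥ M *ᵥ a := by
  rw [dotProduct_mulVec, ← hM, vecMul_transpose, dotProduct_comm, hM]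

theorem dotProduct_mulVec_self_eq_zero_of_transpose_eq_neg [CommRing R] [IsAddTorsionFree R]
    {M : Matrix ι ι R} (hM : Mᵀ = -M) (a : ι → R) : a ⬝ᵥ M *ᵥ a = 0 := by
  refine self_eq_neg.mp ?_
  calc a ⬝ᵥ M *ᵥ a = (Mᵀ *ᵥ a) ⬝ᵥ a := by rw [mulVec_transpose, dotProduct_mulVec]
    _ = -(a ⬝ᵥ M *ᵥ a) := by rw [hM, neg_mulVec, neg_dotProduct, dotProduct_comm]

theorem two_mul_dotProduct_mulVec_sub [CommRing R] {M : Matrix ι ι R} (hM : Mᵀ = M)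
    (a b : ι → R) :
    2 * (a ⬝ᵥ M *ᵥ (a - b)) = a ⬝ᵥ M *ᵥ a - b ⬝ᵥ M *ᵥ b + (a - b) ⬝ᵥ M *ᵥ (a - b) := by
  have hab := dotProduct_mulVec_comm_of_transpose_eq hM a b
  simp only [mulVec_sub, dotProduct_sub, sub_dotProduct]
  linear_combination -hab

theorem dotProduct_one_sub_smul_mulVec_self [DecidableEq ι] [CommRing R] (M : Matrix ι ι R)
    (α : R) (v : ι → R) : v ⬝ᵥ (1 - α • M) *ᵥ v = v ⬝ᵥ v - α * (v ⬝ᵥ M *ᵥ v) := by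
  simp only [sub_mulVec, one_mulVec, smul_mulVec, dotProduct_sub, dotProduct_smul, smul_eq_mul]

theorem dotProduct_self_nonneg [CommRing R] [LinearOrder R] [IsStrictOrderedRing R]
    (v : ι → R) : 0 ≤ v ⬝ᵥ v :=
  Finset.sum_nonneg fun i _ => mul_self_nonneg (v i)

theorem dotProduct_sub_self_comm [CommRing R] (a b : ι → R) :
    (a - b) ⬝ᵥ (a - b) = (b - a) ⬝ᵥ (b - a) := by
  rw [← neg_sub b a, neg_dotProduct_neg]

end QuadraticForm

section SpectralNorm

variable {n : ℕ} (M : Matrix (Fin n) (Fin n) ℝ)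

theorem abs_dotProduct_mulVec_self_le_specNorm (v : Fin n → ℝ) :
    |v ⬝ᵥ M *ᵥ v| ≤ specNorm M * (v ⬝ᵥ v) := by
  set w : EuclideanSpace ℝ (Fin n) := WithLp.toLp 2 v
  have hnorm : ‖w‖ ^ 2 = v ⬝ᵥ v := by
    rw [← real_inner_self_eq_norm_sq, EuclideanSpace.inner_eq_star_dotProduct]
    rfl
  calc |v ⬝ᵥ M *ᵥ v| = |inner ℝ w (toEuclideanCLM (𝕜 := ℝ) M w)| := by
        rw [inner_toEuclideanCLM]
    _ ≤ ‖w‖ * ‖toEuclideanCLM (𝕜 := ℝ) M w‖ := abs_real_inner_le_norm _ _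
    _ ≤ ‖w‖ * (specNorm M * ‖w‖) := by
        gcongr
        exact (toEuclideanCLM (𝕜 := ℝ) M).le_opNorm w
    _ = specNorm M * (v ⬝ᵥ v) := by rw [← hnorm]; ring

variable {α : ℝ} (hα : 0 ≤ α) (v : Fin n → ℝ)
include hα

theorem le_dotProduct_one_sub_smul_mulVec_self :
    (1 - α * specNorm M) * (v ⬝ᵥ v) ≤ v ⬝ᵥ (1 - α • M) *ᵥ v := by
  have h := mul_le_mul_of_nonneg_left (abs_dotProduct_mulVec_self_le_specNorm M v) hα
  rw [dotProduct_one_sub_smul_mulVec_self]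
  nlinarith [le_abs_self (v ⬝ᵥ M *ᵥ v)]

theorem dotProduct_one_sub_smul_mulVec_self_le :
    v ⬝ᵥ (1 - α • M) *ᵥ v ≤ (1 + α * specNorm M) * (v ⬝ᵥ v) := by
  have h := mul_le_mul_of_nonneg_left (abs_dotProduct_mulVec_self_le_specNorm M v) hα
  rw [dotProduct_one_sub_smul_mulVec_self]
  nlinarith [neg_abs_le (v ⬝ᵥ M *ᵥ v)]

end SpectralNorm

section Bregman

variable {ι : Type*} [Fintype ι] (F : (ι → ℝ) → ℝ) (gradF : (ι → ℝ) → ι → ℝ)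

def bregman (x y : ι → ℝ) : ℝ :=
  F x - F y - gradF y ⬝ᵥ (x - y)

theorem bregman_add_bregman_sub_bregman (x y z : ι → ℝ) :
    bregman F gradF y z + bregman F gradF z x - bregman F gradF y x
      = (gradF x - gradF z) ⬝ᵥ (y - z) := by
  simp only [bregman, sub_dotProduct, dotProduct_sub]
  ring

end Bregman

section GSS

variable {n : ℕ} (F : (Fin n → ℝ) → ℝ) (gradF : (Fin n → ℝ) → Fin n → ℝ) (α : ℝ)
  (S : Matrix (Fin n) (Fin n) ℝ) (xs : Fin n → ℝ)

/-- The Lyapunov function `E^{αBD}` of the paper, with `S = Bˢʸᵐ` and `xs = x*`. -/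
noncomputable def gssEnergy (x : Fin n → ℝ) : ℝ :=
  1 / 2 * ((x - xs) ⬝ᵥ (1 - α • S) *ᵥ (x - xs)) - α * bregman F gradF xs x

theorem gss_step_inner {B N : Matrix (Fin n) (Fin n) ℝ} (hskew : Nᵀ = -N)
    (hNB : N = (B + Bᵀ) - (2 : ℝ) • B) (hxs : gradF xs + N *ᵥ xs = 0) {x y : Fin n → ℝ}
    (hstep : y - x = -(α • (gradF x + (B + Bᵀ) *ᵥ x - (2 : ℝ) • B *ᵥ y))) :
    (y - xs) ⬝ᵥ (1 - α • (B + Bᵀ)) *ᵥ (y - x)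
      = -α * ((gradF x - gradF xs) ⬝ᵥ (y - xs)) := by
  have hstep' : (1 - α • (B + Bᵀ)) *ᵥ (y - x)
      = (-α) • (gradF x - gradF xs + N *ᵥ (y - xs)) := by
    subst hNB
    simp only [sub_mulVec, one_mulVec, smul_mulVec, mulVec_sub] at hxs ⊢
    linear_combination (norm := module) hstep + (-α) • hxs
  rw [hstep', dotProduct_smul, dotProduct_add,
    dotProduct_mulVec_self_eq_zero_of_transpose_eq_neg hskew, dotProduct_comm, smul_eq_mul,
    add_zero]

theorem gssEnergy_sub_gssEnergy (hS : Sᵀ = S) {x y : Fin n → ℝ}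
    (hinner : (y - xs) ⬝ᵥ (1 - α • S) *ᵥ (y - x) = -α * ((gradF x - gradF xs) ⬝ᵥ (y - xs))) :
    gssEnergy F gradF α S xs y - gssEnergy F gradF α S xs x
      = -(1 / 2 * ((y - x) ⬝ᵥ (1 - α • S) *ᵥ (y - x))) + α * bregman F gradF y x
        - α * (bregman F gradF y xs + bregman F gradF xs y) := by
  have hM : (1 - α • S)ᵀ = 1 - α • S := by
    rw [transpose_sub, transpose_one, transpose_smul, hS]
  have hpolar := two_mul_dotProduct_mulVec_sub hM (y - xs) (x - xs)
  rw [sub_sub_sub_cancel_right] at hpolar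
  have hthree := bregman_add_bregman_sub_bregman F gradF x y xs
  unfold gssEnergy
  linear_combination -(1 / 2 : ℝ) * hpolar + hinner + α * hthree

variable {F gradF α S xs}

theorem gssEnergy_le {μ : ℝ} (hμ : 0 ≤ μ) (hα : 0 ≤ α)
    (hlower : ∀ x y, μ / 2 * ((x - y) ⬝ᵥ (x - y)) ≤ bregman F gradF x y) (x : Fin n → ℝ) :
    gssEnergy F gradF α S xs x ≤ (1 + α * specNorm S) / 2 * ((x - xs) ⬝ᵥ (x - xs)) := by
  have hM := dotProduct_one_sub_smul_mulVec_self_le S hα (x - xs)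
  have hD : 0 ≤ bregman F gradF xs x :=
    (mul_nonneg (by positivity) (dotProduct_self_nonneg _)).trans (hlower xs x)
  unfold gssEnergy
  nlinarith [mul_nonneg hα hD]

theorem le_gssEnergy {LF : ℝ} (hα : 0 ≤ α)
    (hupper : ∀ x y, bregman F gradF x y ≤ LF / 2 * ((x - y) ⬝ᵥ (x - y))) (x : Fin n → ℝ) :
    (1 - α * specNorm S - α * LF) / 2 * ((x - xs) ⬝ᵥ (x - xs)) ≤ gssEnergy F gradF α S xs x := by
  have hM := le_dotProduct_one_sub_smul_mulVec_self S hα (x - xs)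
  have hD := mul_le_mul_of_nonneg_left (hupper xs x) hα
  rw [← dotProduct_sub_self_comm x xs] at hD
  unfold gssEnergy
  linarith

theorem gssEnergy_le_inv_mul (hS : Sᵀ = S) {μ LF : ℝ} (hμ : 0 ≤ μ) (hα : 0 ≤ α)
    (hαS : α * specNorm S ≤ 1 / 2) (hαLF : α * LF ≤ 1 / 2)
    (hlower : ∀ x y, μ / 2 * ((x - y) ⬝ᵥ (x - y)) ≤ bregman F gradF x y)
    (hupper : ∀ x y, bregman F gradF x y ≤ LF / 2 * ((x - y) ⬝ᵥ (x - y))) {x y : Fin n → ℝ}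
    (hinner : (y - xs) ⬝ᵥ (1 - α • S) *ᵥ (y - x) = -α * ((gradF x - gradF xs) ⬝ᵥ (y - xs))) :
    gssEnergy F gradF α S xs y ≤ (1 + α * μ)⁻¹ * gssEnergy F gradF α S xs x := by
  have hdescent : gssEnergy F gradF α S xs y - gssEnergy F gradF α S xs x
      ≤ -(α * μ * ((y - xs) ⬝ᵥ (y - xs))) := by
    rw [gssEnergy_sub_gssEnergy F gradF α S xs hS hinner]
    have hdd := dotProduct_self_nonneg (y - x)
    have hM := le_dotProduct_one_sub_smul_mulVec_self S hα (y - x)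
    have hup := mul_le_mul_of_nonneg_left (hupper y x) hα
    have hlow := add_le_add (hlower y xs) (hlower xs y)
    rw [← dotProduct_sub_self_comm y xs] at hlow
    nlinarith [mul_le_mul_of_nonneg_left hlow hα, mul_le_mul_of_nonneg_right hαS hdd,
      mul_le_mul_of_nonneg_right hαLF hdd]
  have hee := dotProduct_self_nonneg (y - xs)
  have henergy : gssEnergy F gradF α S xs y ≤ (y - xs) ⬝ᵥ (y - xs) := by
    nlinarith [gssEnergy_le (S := S) (xs := xs) hμ hα hlower y,
      mul_le_mul_of_nonneg_right hαS hee]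
  rw [le_inv_mul_iff₀ (by positivity)]
  nlinarith [mul_le_mul_of_nonneg_left henergy (mul_nonneg hα hμ)]

end GSS

section StepSize

variable {α a b : ℝ} (hα : 0 < α)
include hα

theorem mul_lt_half_of_lt_one_div_max (h : α < 1 / max (2 * a) (2 * b)) :
    α * a < 1 / 2 ∧ α * b < 1 / 2 := by
  have hmax : 0 < max (2 * a) (2 * b) := one_div_pos.mp (hα.trans h)
  rw [lt_div_iff₀ hmax] at h
  constructor <;> nlinarith [le_max_left (2 * a) (2 * b), le_max_right (2 * a) (2 * b)]

variable (h : α = min (1 / (4 * a)) (1 / (4 * b)))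
include h

theorem pos_and_mul_le_quarter_of_eq_min :
    (0 < a ∧ α * a ≤ 1 / 4) ∧ (0 < b ∧ α * b ≤ 1 / 4) := by
  have key {c : ℝ} (hc : α ≤ 1 / (4 * c)) : 0 < c ∧ α * c ≤ 1 / 4 := by
    have hc0 : 0 < c := by linarith [one_div_pos.mp (hα.trans_le hc)]
    rw [le_div_iff₀ (by positivity)] at hc
    exact ⟨hc0, by linarith⟩
  exact ⟨key (h ▸ min_le_left _ _), key (h ▸ min_le_right _ _)⟩

theorem one_div_max_div_eq_mul_of_eq_min {μ : ℝ} (hμ : 0 < μ) :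
    1 / max (4 * a / μ) (4 * b / μ) = α * μ := by
  obtain ⟨⟨ha, -⟩, hb, -⟩ := pos_and_mul_le_quarter_of_eq_min hα h
  rw [max_div_div_right hμ.le, one_div_div, h]
  rcases le_total a b with hab | hab
  · rw [max_eq_right (by linarith),
      min_eq_right (one_div_le_one_div_of_le (by positivity) (by linarith))]
    ring
  · rw [max_eq_left (by linarith),
      min_eq_left (one_div_le_one_div_of_le (by positivity) (by linarith))]
    ring

end StepSize

theorem gss_linear_convergence_general
    {n : ℕ} (μ LF α : ℝ) (hμ : 0 < μ)
    (F : (Fin n → ℝ) → ℝ) (gradF : (Fin n → ℝ) → (Fin n → ℝ))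
    (hlower : ∀ x y : Fin n → ℝ,
      μ / 2 * ((x - y) ⬝ᵥ (x - y)) ≤ F x - F y - gradF y ⬝ᵥ (x - y))
    (hupper : ∀ x y : Fin n → ℝ,
      F x - F y - gradF y ⬝ᵥ (x - y) ≤ LF / 2 * ((x - y) ⬝ᵥ (x - y)))
    (N B : Matrix (Fin n) (Fin n) ℝ)
    (hskew : Nᵀ = -N)
    (hNB : N = (B + Bᵀ) - (2 : ℝ) • B)
    (xs : Fin n → ℝ) (hxs : gradF xs + N.mulVec xs = 0)
    (hα0 : 0 < α)
    (hα1 : α < 1 / max (2 * specNorm (B + Bᵀ)) (2 * LF))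
    (x : ℕ → (Fin n → ℝ))
    (hiter : ∀ k, x (k + 1) - x k =
      -(α • (gradF (x k) + (B + Bᵀ).mulVec (x k) - (2 : ℝ) • B.mulVec (x (k + 1))))) :
    (∀ k,
      (1 / 2) * ((x (k + 1) - xs) ⬝ᵥ ((1 - α • (B + Bᵀ)).mulVec (x (k + 1) - xs)))
          - α * (F xs - F (x (k + 1)) - gradF (x (k + 1)) ⬝ᵥ (xs - x (k + 1)))
        ≤ (1 + α * μ)⁻¹ *
          ((1 / 2) * ((x k - xs) ⬝ᵥ ((1 - α • (B + Bᵀ)).mulVec (x k - xs)))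
            - α * (F xs - F (x k) - gradF (x k) ⬝ᵥ (xs - x k)))) ∧
    (α = min (1 / (4 * specNorm (B + Bᵀ))) (1 / (4 * LF)) → ∀ k,
      (x k - xs) ⬝ᵥ (x k - xs)
        ≤ ((1 + 1 / max (4 * specNorm (B + Bᵀ) / μ) (4 * LF / μ))⁻¹) ^ k
            * (6 * ((x 0 - xs) ⬝ᵥ (x 0 - xs)))) := by
  have hS : (B + Bᵀ)ᵀ = B + Bᵀ := by rw [transpose_add, transpose_transpose, add_comm]
  obtain ⟨hαB, hαF⟩ := mul_lt_half_of_lt_one_div_max hα0 hα1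
  have hdecay (k : ℕ) : gssEnergy F gradF α (B + Bᵀ) xs (x (k + 1))
      ≤ (1 + α * μ)⁻¹ * gssEnergy F gradF α (B + Bᵀ) xs (x k) :=
    gssEnergy_le_inv_mul hS hμ.le hα0.le hαB.le hαF.le hlower hupper
      (gss_step_inner gradF α xs hskew hNB hxs (hiter k))
  refine ⟨hdecay, fun hmin k => ?_⟩
  obtain ⟨⟨-, hαB'⟩, -, hαF'⟩ := pos_and_mul_le_quarter_of_eq_min hα0 hmin
  rw [one_div_max_div_eq_mul_of_eq_min hα0 hmin hμ]
  have hq : 0 ≤ (1 + α * μ)⁻¹ ^ k := by positivity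
  have hek := dotProduct_self_nonneg (x k - xs)
  have he0 := dotProduct_self_nonneg (x 0 - xs)
  calc (x k - xs) ⬝ᵥ (x k - xs) ≤ 4 * gssEnergy F gradF α (B + Bᵀ) xs (x k) := by
        nlinarith [le_gssEnergy (S := B + Bᵀ) (xs := xs) hα0.le hupper (x k),
          mul_le_mul_of_nonneg_right hαB' hek, mul_le_mul_of_nonneg_right hαF' hek]
    _ ≤ 4 * ((1 + α * μ)⁻¹ ^ k * gssEnergy F gradF α (B + Bᵀ) xs (x 0)) := by
        gcongr
        exact le_geom (u := fun k => gssEnergy F gradF α (B + Bᵀ) xs (x k)) (by positivity) k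
          fun j _ => hdecay j
    _ ≤ 4 * ((1 + α * μ)⁻¹ ^ k * (5 / 8 * ((x 0 - xs) ⬝ᵥ (x 0 - xs)))) := by
        gcongr
        nlinarith [gssEnergy_le (S := B + Bᵀ) (xs := xs) hμ.le hα0.le hlower (x 0),
          mul_le_mul_of_nonneg_right hαB' he0]
    _ ≤ (1 + α * μ)⁻¹ ^ k * (6 * ((x 0 - xs) ⬝ᵥ (x 0 - xs))) := by
        nlinarith [mul_nonneg hq he0]

/-- **Linear convergence of the gradient and skew-symmetric splitting (GSS) method.**
For `F ∈ S_{μ,L_F}` (`μ > 0`), `N = Bˢʸᵐ - 2B` skew-symmetric with `Bˢʸᵐ = B + Bᵀ`,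
`∇F(x*) + N x* = 0`, step size `0 < α < 1/max{2‖Bˢʸᵐ‖, 2L_F}`, and iteration
`(x_{k+1} - x_k)/α = -(∇F(x_k) + Bˢʸᵐ x_k - 2B x_{k+1})`, the Lyapunov function
`E(x) = ½‖x - x*‖²_{I-αBˢʸᵐ} - α D_F(x*, x)` decays as `E(x_{k+1}) ≤ (1+αμ)⁻¹E(x_k)`;
moreover for `α = min{1/(4‖Bˢʸᵐ‖), 1/(4L_F)}` one has
`‖x_k - x*‖² ≤ (1 + 1/max{4‖Bˢʸᵐ‖/μ, 4L_F/μ})⁻ᵏ · 6‖x_0 - x*‖²`. -/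
theorem gss_linear_convergence
    {n : ℕ} (μ LF α : ℝ) (hμ : 0 < μ)
    (F : (Fin n → ℝ) → ℝ) (gradF : (Fin n → ℝ) → (Fin n → ℝ))
    (hdiff : ∀ x, HasFDerivAt F (dpCLM (gradF x)) x)
    (hlower : ∀ x y : Fin n → ℝ,
      μ / 2 * ((x - y) ⬝ᵥ (x - y)) ≤ F x - F y - gradF y ⬝ᵥ (x - y))
    (hupper : ∀ x y : Fin n → ℝ,
      F x - F y - gradF y ⬝ᵥ (x - y) ≤ LF / 2 * ((x - y) ⬝ᵥ (x - y)))
    (N B : Matrix (Fin n) (Fin n) ℝ)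
    (hskew : Nᵀ = -N)
    (hNB : N = (B + Bᵀ) - (2 : ℝ) • B)
    (xs : Fin n → ℝ) (hxs : gradF xs + N.mulVec xs = 0)
    (hα0 : 0 < α)
    (hα1 : α < 1 / max (2 * specNorm (B + Bᵀ)) (2 * LF))
    (x : ℕ → (Fin n → ℝ))
    (hiter : ∀ k, x (k + 1) - x k =
      -(α • (gradF (x k) + (B + Bᵀ).mulVec (x k) - (2 : ℝ) • B.mulVec (x (k + 1))))) :
    (∀ k,
      (1 / 2) * ((x (k + 1) - xs) ⬝ᵥ ((1 - α • (B + Bᵀ)).mulVec (x (k + 1) - xs)))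
          - α * (F xs - F (x (k + 1)) - gradF (x (k + 1)) ⬝ᵥ (xs - x (k + 1)))
        ≤ (1 + α * μ)⁻¹ *
          ((1 / 2) * ((x k - xs) ⬝ᵥ ((1 - α • (B + Bᵀ)).mulVec (x k - xs)))
            - α * (F xs - F (x k) - gradF (x k) ⬝ᵥ (xs - x k)))) ∧
    (α = min (1 / (4 * specNorm (B + Bᵀ))) (1 / (4 * LF)) → ∀ k,
      (x k - xs) ⬝ᵥ (x k - xs)
        ≤ ((1 + 1 / max (4 * specNorm (B + Bᵀ) / μ) (4 * LF / μ))⁻¹) ^ k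
            * (6 * ((x 0 - xs) ⬝ᵥ (x 0 - xs)))) :=
  gss_linear_convergence_general μ LF α hμ F gradF hlower hupper N B hskew hNB xs hxs hα0 hα1 x
    hiter
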